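/- Let λ,b,c,α₁,α₂ ∈ ℂ with c±λ, α₁−b−λ, α₂−b+λ, α₁+2b, α₂+2b, α₁+α₂+b±c, c±3b all not integers. Then the sl₃-module F^α_{2b}(V) is irreducible. -/

import Mathlib

set_option linter.unusedVariables false
/- F^α_{2b}(V) modeled as (ℤ × ℤ × ℤ) →₀ ℂ with basis vᵢ(r₁,r₂) = single (i,r₁,r₂) 1,
   carrying the sl₃-action of formulas (3.2): parameters α₁, α₂, λ (written lam), b, c. -/

abbrev F3 := (ℤ × ℤ × ℤ) →₀ ℂ

/-- The basis vector vᵢ(r₁,r₂). -/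
noncomputable def vb (i r₁ r₂ : ℤ) : F3 := Finsupp.single (i, r₁, r₂) 1

noncomputable def Eb11 (α₁ α₂ lam b c : ℂ) : F3 →ₗ[ℂ] F3 :=
  Finsupp.lsum ℂ fun p => ((p.2.1 : ℂ) + α₁) • Finsupp.lsingle p

noncomputable def Eb22 (α₁ α₂ lam b c : ℂ) : F3 →ₗ[ℂ] F3 :=
  Finsupp.lsum ℂ fun p => ((p.2.2 : ℂ) + α₂) • Finsupp.lsingle p

noncomputable def Eb33 (α₁ α₂ lam b c : ℂ) : F3 →ₗ[ℂ] F3 :=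
  Finsupp.lsum ℂ fun p => (-((p.2.1 : ℂ) + α₁ + (p.2.2 : ℂ) + α₂)) • Finsupp.lsingle p

noncomputable def Eb12 (α₁ α₂ lam b c : ℂ) : F3 →ₗ[ℂ] F3 :=
  Finsupp.lsum ℂ fun p =>
    (lam + (p.1 : ℂ) - b + (p.2.2 : ℂ) + α₂) • Finsupp.lsingle (p.1, p.2.1 + 1, p.2.2 - 1)
      + (c + lam + (p.1 : ℂ)) • Finsupp.lsingle (p.1 + 1, p.2.1 + 1, p.2.2 - 1)

noncomputable def Eb21 (α₁ α₂ lam b c : ℂ) : F3 →ₗ[ℂ] F3 :=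
  Finsupp.lsum ℂ fun p =>
    (c - lam - (p.1 : ℂ)) • Finsupp.lsingle (p.1 - 1, p.2.1 - 1, p.2.2 + 1)
      + (-(lam + (p.1 : ℂ)) - b + (p.2.1 : ℂ) + α₁) • Finsupp.lsingle (p.1, p.2.1 - 1, p.2.2 + 1)

noncomputable def Eb13 (α₁ α₂ lam b c : ℂ) : F3 →ₗ[ℂ] F3 :=
  Finsupp.lsum ℂ fun p =>
    -(((p.2.1 : ℂ) + α₁ + (p.2.2 : ℂ) + α₂ + b + lam + (p.1 : ℂ)) • Finsupp.lsingle (p.1, p.2.1 + 1, p.2.2)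
      + (c + lam + (p.1 : ℂ)) • Finsupp.lsingle (p.1 + 1, p.2.1 + 1, p.2.2))

noncomputable def Eb31 (α₁ α₂ lam b c : ℂ) : F3 →ₗ[ℂ] F3 :=
  Finsupp.lsum ℂ fun p =>
    ((p.2.1 : ℂ) + α₁ - b - lam - (p.1 : ℂ)) • Finsupp.lsingle (p.1, p.2.1 - 1, p.2.2)

noncomputable def Eb23 (α₁ α₂ lam b c : ℂ) : F3 →ₗ[ℂ] F3 :=
  Finsupp.lsum ℂ fun p =>
    -((c - lam - (p.1 : ℂ)) • Finsupp.lsingle (p.1 - 1, p.2.1, p.2.2 + 1)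
      + ((p.2.1 : ℂ) + α₁ + (p.2.2 : ℂ) + α₂ + b - lam - (p.1 : ℂ)) • Finsupp.lsingle (p.1, p.2.1, p.2.2 + 1))

noncomputable def Eb32 (α₁ α₂ lam b c : ℂ) : F3 →ₗ[ℂ] F3 :=
  Finsupp.lsum ℂ fun p =>
    ((p.2.2 : ℂ) + α₂ - b + lam + (p.1 : ℂ)) • Finsupp.lsingle (p.1, p.2.1, p.2.2 - 1)

/-!
The diagonal operators `E₁₁`, `E₂₂` separate the weights `(r₁, r₂)`, so a nonzero invariant
subspace `W` contains a nonzero `w` supported on one weight, with `i` in a segment `[m, M]`.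
If `m < M`, one of two explicit combinations of `E₁₂ E₃₁`, `E₁₃ E₃₁ E₃₂`, `E₃₂`
(resp. `E₂₁ E₃₂`, `E₂₃ E₃₂ E₃₁`, `E₃₁`) applied to `w` is a nonzero element of `W` supported on a
shorter segment: if both vanished, eliminating `w(m + 1)` from two of their coefficients would give
`w(m) (M - m) (c - 3b + M - m + 1) (c + 3b - M + m - 2) = 0`. So `W` contains a basis vector
`vᵢ(r₁, r₂)`. Then `E₁₃ E₃₁` and `E₂₃ E₃₂` move `i` up and down, `E₃₁` and `E₃₂` lower `r₁`
and `r₂`, and two `2 × 2` systems with determinant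
`±(α₁ + α₂ + b - c + r₁ + r₂)(α₁ + α₂ + b + c + r₁ + r₂ - 1)` raise them; the genericity
conditions keep every coefficient nonzero, so `W` contains every basis vector.
-/

theorem Submodule.mem_of_smul_add_smul_mem_of_det_ne_zero {K V : Type*} [Field K] [AddCommGroup V]
    [Module K V] {W : Submodule K V} {x y : V} {a₁ b₁ a₂ b₂ : K} (hdet : a₁ * b₂ - a₂ * b₁ ≠ 0)
    (h₁ : a₁ • x + b₁ • y ∈ W) (h₂ : a₂ • x + b₂ • y ∈ W) : x ∈ W := by
  have hx : (a₁ * b₂ - a₂ * b₁) • x = b₂ • (a₁ • x + b₁ • y) - b₁ • (a₂ • x + b₂ • y) := by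
    module
  exact (W.smul_mem_iff hdet).1 (hx ▸ W.sub_mem (W.smul_mem _ h₁) (W.smul_mem _ h₂))

theorem Finsupp.exists_eigenvector_mem_of_diagonal {ι K : Type*} [Field K]
    {W : Submodule K (ι →₀ K)} {D : (ι →₀ K) →ₗ[K] ι →₀ K} {μ : ι → K}
    (hD : ∀ w p, D w p = μ p * w p) (hW : ∀ x ∈ W, D x ∈ W) {w : ι →₀ K} (hw : w ∈ W)
    (hw0 : w ≠ 0) :
    ∃ w' ∈ W, w' ≠ 0 ∧ w'.support ⊆ w.support ∧ ∀ p ∈ w'.support, ∀ q ∈ w'.support, μ p = μ q := by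
  classical
  induction h : (w.support.image μ).card using Nat.strong_induction_on generalizing w with
  | _ n ih =>
  by_cases hle : (w.support.image μ).card ≤ 1
  · exact ⟨w, hw, hw0, subset_rfl, fun p hp q hq => Finset.card_le_one.1 hle _
      (Finset.mem_image_of_mem μ hp) _ (Finset.mem_image_of_mem μ hq)⟩
  obtain ⟨a, ha, a', ha', hne⟩ := Finset.one_lt_card.1 (not_le.1 hle)
  have hw₁ : ∀ p, (D w - a • w) p = (μ p - a) * w p := fun p => by
    rw [Finsupp.sub_apply, hD, Finsupp.smul_apply, smul_eq_mul, sub_mul]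
  have hsupp : (D w - a • w).support ⊆ w.support := fun p hp => by
    rw [Finsupp.mem_support_iff, hw₁] at hp
    exact Finsupp.mem_support_iff.2 (right_ne_zero_of_mul hp)
  have himage : (D w - a • w).support.image μ ⊆ (w.support.image μ).erase a := by
    intro x hx
    obtain ⟨p, hp, rfl⟩ := Finset.mem_image.1 hx
    rw [Finsupp.mem_support_iff, hw₁] at hp
    exact Finset.mem_erase.2 ⟨sub_ne_zero.1 (left_ne_zero_of_mul hp),
      Finset.mem_image_of_mem μ (hsupp (Finsupp.mem_support_iff.2 (by rwa [hw₁])))⟩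
  obtain ⟨p', hp', rfl⟩ := Finset.mem_image.1 ha'
  have hne0 : D w - a • w ≠ 0 := fun h0 => by
    have := congrArg (· p') h0
    simp only [hw₁, Finsupp.coe_zero, Pi.zero_apply, mul_eq_zero, sub_eq_zero] at this
    exact this.elim (hne ·.symm) (Finsupp.mem_support_iff.1 hp')
  obtain ⟨w', hw', hw'0, hsub, hconst⟩ := ih _ (h ▸ (Finset.card_le_card himage).trans_lt
    (Finset.card_erase_lt_of_mem ha)) (W.sub_mem (hW w hw) (W.smul_mem a hw)) hne0 rfl
  exact ⟨w', hw', hw'0, hsub.trans hsupp, hconst⟩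

theorem ne_zero_of_eq_add_intCast {z w : ℂ} (hz : ∀ m : ℤ, z ≠ m) (t : ℤ) (hw : w = z + t) :
    w ≠ 0 :=
  hw ▸ fun h => hz (-t) (by push_cast; linear_combination h)

namespace Finsupp

variable {ι R : Type*} [CommSemiring R]

theorem lsum_smul_lsingle_apply (coef : ι → R) {σ τ : ι → ι} (hl : Function.LeftInverse τ σ)
    (hr : Function.RightInverse τ σ) (w : ι →₀ R) (k : ι) :
    (lsum R (fun p => coef p • lsingle (σ p)) : (ι →₀ R) →ₗ[R] ι →₀ R) w k
      = coef (τ k) * w (τ k) := by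
  induction w using Finsupp.induction_linear with
  | zero => simp
  | add f g hf hg => rw [map_add, add_apply, hf, hg, add_apply, mul_add]
  | single p x =>
    classical
    simp only [lsum_single, LinearMap.smul_apply, lsingle_apply, smul_apply, single_apply,
      smul_eq_mul]
    by_cases h : σ p = k
    · subst h; simp [hl p]
    · rw [if_neg h, if_neg (fun h' => h (by rw [h', hr k])), mul_zero, mul_zero]

theorem lsum_add_apply (f g : ι → R →ₗ[R] ι →₀ R) (w : ι →₀ R) (k : ι) :
    (lsum R (fun p => f p + g p) : (ι →₀ R) →ₗ[R] ι →₀ R) w k = lsum R f w k + lsum R g w k := by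
  rw [show (fun p => f p + g p) = f + g from rfl, map_add]
  rfl

theorem lsum_neg_apply {S : Type*} [CommRing S] (f : ι → S →ₗ[S] ι →₀ S) (w : ι →₀ S) (k : ι) :
    (lsum S (fun p => -f p) : (ι →₀ S) →ₗ[S] ι →₀ S) w k = -lsum S f w k := by
  simp [lsum_apply, sum_apply]

end Finsupp

section Module

variable {α₁ α₂ lam b c : ℂ}

local notation "E₁₁" => Eb11 α₁ α₂ lam b c
local notation "E₂₂" => Eb22 α₁ α₂ lam b c
local notation "E₁₂" => Eb12 α₁ α₂ lam b c
local notation "E₂₁" => Eb21 α₁ α₂ lam b c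
local notation "E₁₃" => Eb13 α₁ α₂ lam b c
local notation "E₃₁" => Eb31 α₁ α₂ lam b c
local notation "E₂₃" => Eb23 α₁ α₂ lam b c
local notation "E₃₂" => Eb32 α₁ α₂ lam b c

section Coordinates

variable (w : F3) (i r₁ r₂ : ℤ)

theorem Eb11_apply : E₁₁ w (i, r₁, r₂) = (r₁ + α₁) * w (i, r₁, r₂) :=
  Finsupp.lsum_smul_lsingle_apply _ (σ := fun p => p) (τ := fun p => p) (fun _ => rfl)
    (fun _ => rfl) w _

theorem Eb22_apply : E₂₂ w (i, r₁, r₂) = (r₂ + α₂) * w (i, r₁, r₂) :=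
  Finsupp.lsum_smul_lsingle_apply _ (σ := fun p => p) (τ := fun p => p) (fun _ => rfl)
    (fun _ => rfl) w _

theorem Eb31_apply :
    E₃₁ w (i, r₁, r₂) = (r₁ + 1 + α₁ - b - lam - i) * w (i, r₁ + 1, r₂) := by
  rw [Eb31, Finsupp.lsum_smul_lsingle_apply _ (τ := fun p => (p.1, p.2.1 + 1, p.2.2))
    (fun _ => by simp) (fun _ => by simp)]
  push_cast; ring

theorem Eb32_apply :
    E₃₂ w (i, r₁, r₂) = (r₂ + 1 + α₂ - b + lam + i) * w (i, r₁, r₂ + 1) := by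
  rw [Eb32, Finsupp.lsum_smul_lsingle_apply _ (τ := fun p => (p.1, p.2.1, p.2.2 + 1))
    (fun _ => by simp) (fun _ => by simp)]
  push_cast; ring

theorem Eb12_apply :
    E₁₂ w (i, r₁, r₂) = (lam + i - b + r₂ + 1 + α₂) * w (i, r₁ - 1, r₂ + 1)
      + (c + lam + i - 1) * w (i - 1, r₁ - 1, r₂ + 1) := by
  rw [Eb12, Finsupp.lsum_add_apply,
    Finsupp.lsum_smul_lsingle_apply _ (τ := fun p => (p.1, p.2.1 - 1, p.2.2 + 1))
      (fun _ => by simp) (fun _ => by simp),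
    Finsupp.lsum_smul_lsingle_apply _ (τ := fun p => (p.1 - 1, p.2.1 - 1, p.2.2 + 1))
      (fun _ => by simp) (fun _ => by simp)]
  push_cast; ring

theorem Eb21_apply :
    E₂₁ w (i, r₁, r₂) = (c - lam - i - 1) * w (i + 1, r₁ + 1, r₂ - 1)
      + (r₁ + 1 + α₁ - b - lam - i) * w (i, r₁ + 1, r₂ - 1) := by
  rw [Eb21, Finsupp.lsum_add_apply,
    Finsupp.lsum_smul_lsingle_apply _ (τ := fun p => (p.1 + 1, p.2.1 + 1, p.2.2 - 1))
      (fun _ => by simp) (fun _ => by simp),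
    Finsupp.lsum_smul_lsingle_apply _ (τ := fun p => (p.1, p.2.1 + 1, p.2.2 - 1))
      (fun _ => by simp) (fun _ => by simp)]
  push_cast; ring

theorem Eb13_apply :
    E₁₃ w (i, r₁, r₂) = -(r₁ - 1 + α₁ + r₂ + α₂ + b + lam + i) * w (i, r₁ - 1, r₂)
      - (c + lam + i - 1) * w (i - 1, r₁ - 1, r₂) := by
  rw [Eb13, Finsupp.lsum_neg_apply, Finsupp.lsum_add_apply,
    Finsupp.lsum_smul_lsingle_apply _ (τ := fun p => (p.1, p.2.1 - 1, p.2.2))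
      (fun _ => by simp) (fun _ => by simp),
    Finsupp.lsum_smul_lsingle_apply _ (τ := fun p => (p.1 - 1, p.2.1 - 1, p.2.2))
      (fun _ => by simp) (fun _ => by simp)]
  push_cast; ring

theorem Eb23_apply :
    E₂₃ w (i, r₁, r₂) = -(c - lam - i - 1) * w (i + 1, r₁, r₂ - 1)
      - (r₁ + α₁ + r₂ - 1 + α₂ + b - lam - i) * w (i, r₁, r₂ - 1) := by
  rw [Eb23, Finsupp.lsum_neg_apply, Finsupp.lsum_add_apply,
    Finsupp.lsum_smul_lsingle_apply _ (τ := fun p => (p.1 + 1, p.2.1, p.2.2 - 1))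
      (fun _ => by simp) (fun _ => by simp),
    Finsupp.lsum_smul_lsingle_apply _ (τ := fun p => (p.1, p.2.1, p.2.2 - 1))
      (fun _ => by simp) (fun _ => by simp)]
  push_cast; ring

theorem Eb31_vb : E₃₁ (vb i r₁ r₂) = (r₁ + α₁ - b - lam - i) • vb i (r₁ - 1) r₂ := by
  simp [vb, Eb31]

theorem Eb32_vb : E₃₂ (vb i r₁ r₂) = (r₂ + α₂ - b + lam + i) • vb i r₁ (r₂ - 1) := by
  simp [vb, Eb32]

theorem Eb12_vb : E₁₂ (vb i r₁ r₂) = (r₂ + α₂ - b + lam + i) • vb i (r₁ + 1) (r₂ - 1)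
    + (c + lam + i) • vb (i + 1) (r₁ + 1) (r₂ - 1) := by
  simp only [vb, Eb12, Finsupp.lsum_single, LinearMap.add_apply, LinearMap.smul_apply,
    Finsupp.lsingle_apply]
  module

theorem Eb21_vb : E₂₁ (vb i r₁ r₂) = (c - lam - i) • vb (i - 1) (r₁ - 1) (r₂ + 1)
    + (r₁ + α₁ - b - lam - i) • vb i (r₁ - 1) (r₂ + 1) := by
  simp only [vb, Eb21, Finsupp.lsum_single, LinearMap.add_apply, LinearMap.smul_apply,
    Finsupp.lsingle_apply]
  module

theorem Eb13_vb : E₁₃ (vb i r₁ r₂) = -(r₁ + α₁ + r₂ + α₂ + b + lam + i) • vb i (r₁ + 1) r₂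
    - (c + lam + i) • vb (i + 1) (r₁ + 1) r₂ := by
  simp only [vb, Eb13, Finsupp.lsum_single, LinearMap.neg_apply, LinearMap.add_apply,
    LinearMap.smul_apply, Finsupp.lsingle_apply]
  module

theorem Eb23_vb : E₂₃ (vb i r₁ r₂) = -(c - lam - i) • vb (i - 1) r₁ (r₂ + 1)
    - (r₁ + α₁ + r₂ + α₂ + b - lam - i) • vb i r₁ (r₂ + 1) := by
  simp only [vb, Eb23, Finsupp.lsum_single, LinearMap.neg_apply, LinearMap.add_apply,
    LinearMap.smul_apply, Finsupp.lsingle_apply]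
  module

end Coordinates

def SupportedIn (w : F3) (σ₁ σ₂ m M : ℤ) : Prop :=
  ∀ i r₁ r₂, w (i, r₁, r₂) ≠ 0 → r₁ = σ₁ ∧ r₂ = σ₂ ∧ m ≤ i ∧ i ≤ M

namespace SupportedIn

variable {w : F3} {σ₁ σ₂ m M : ℤ}

theorem apply_eq_zero (hw : SupportedIn w σ₁ σ₂ m M) {i r₁ r₂ : ℤ}
    (h : ¬(r₁ = σ₁ ∧ r₂ = σ₂ ∧ m ≤ i ∧ i ≤ M)) : w (i, r₁, r₂) = 0 :=
  not_not.1 (mt (hw i r₁ r₂) h)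

theorem eq_smul_vb (hw : SupportedIn w σ₁ σ₂ m M) (hM : M ≤ m) :
    w = w (m, σ₁, σ₂) • vb m σ₁ σ₂ := by
  ext ⟨i, r₁, r₂⟩
  by_cases h : r₁ = σ₁ ∧ r₂ = σ₂ ∧ i = m
  · obtain ⟨rfl, rfl, rfl⟩ := h
    simp [vb]
  · rw [hw.apply_eq_zero (by omega), Finsupp.smul_apply, vb, Finsupp.single_apply,
      if_neg (by simp only [Prod.mk.injEq]; tauto), smul_zero]

theorem of_apply_eq (hw : SupportedIn w σ₁ σ₂ m M) {z : F3} {k d₁ d₂ : ℤ}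
    (A B : ℤ → ℤ → ℤ → ℂ)
    (hz : ∀ j s₁ s₂, z (j, s₁, s₂) = A j s₁ s₂ * w (j + k, s₁ + d₁, s₂ + d₂)
      + B j s₁ s₂ * w (j + k - 1, s₁ + d₁, s₂ + d₂))
    (hA : A (m - k) (σ₁ - d₁) (σ₂ - d₂) = 0) (hB : B (M + 1 - k) (σ₁ - d₁) (σ₂ - d₂) = 0) :
    SupportedIn z (σ₁ - d₁) (σ₂ - d₂) (m + 1 - k) (M - k) := by
  intro j s₁ s₂ hne
  rw [hz] at hne
  have hs : s₁ + d₁ = σ₁ ∧ s₂ + d₂ = σ₂ := by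
    by_contra hs
    exact hne (by rw [hw.apply_eq_zero (by omega), hw.apply_eq_zero (by omega)]; ring)
  obtain ⟨rfl, rfl⟩ : s₁ = σ₁ - d₁ ∧ s₂ = σ₂ - d₂ := by omega
  simp only [sub_add_cancel] at hne
  refine ⟨rfl, rfl, ?_, ?_⟩
  · by_contra hj
    have hlow : w (j + k - 1, σ₁, σ₂) = 0 := hw.apply_eq_zero (by omega)
    obtain rfl : j = m - k := by
      by_contra hj'
      exact hne (by rw [hlow, hw.apply_eq_zero (by omega)]; ring)
    exact hne (by rw [hA, hlow]; ring)
  · by_contra hj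
    have hhigh : w (j + k, σ₁, σ₂) = 0 := hw.apply_eq_zero (by omega)
    obtain rfl : j = M + 1 - k := by
      by_contra hj'
      exact hne (by rw [hhigh, hw.apply_eq_zero (by omega)]; ring)
    exact hne (by rw [hB, hhigh]; ring)

theorem succ_left (hw : SupportedIn w σ₁ σ₂ m M) (hm : w (m, σ₁, σ₂) = 0) :
    SupportedIn w σ₁ σ₂ (m + 1) M := by
  intro i r₁ r₂ hi
  obtain ⟨rfl, rfl, h₁, h₂⟩ := hw i r₁ r₂ hi
  refine ⟨rfl, rfl, ?_, h₂⟩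
  rcases h₁.eq_or_lt with rfl | h
  · exact absurd hm hi
  · omega

end SupportedIn

theorem exists_supportedIn_mem {W : Submodule ℂ F3} (hW11 : ∀ x ∈ W, E₁₁ x ∈ W)
    (hW22 : ∀ x ∈ W, E₂₂ x ∈ W) (hW : W ≠ ⊥) :
    ∃ w ∈ W, w ≠ 0 ∧ ∃ σ₁ σ₂ m M, SupportedIn w σ₁ σ₂ m M := by
  obtain ⟨w, hw, hw0⟩ := Submodule.exists_mem_ne_zero_of_ne_bot hW
  obtain ⟨w₁, hw₁, hw₁0, -, h₁⟩ := Finsupp.exists_eigenvector_mem_of_diagonal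
    (μ := fun p => (p.2.1 : ℂ) + α₁) (fun w ⟨i, r₁, r₂⟩ => Eb11_apply w i r₁ r₂) hW11 hw hw0
  obtain ⟨w₂, hw₂, hw₂0, hsub, h₂⟩ := Finsupp.exists_eigenvector_mem_of_diagonal
    (μ := fun p => (p.2.2 : ℂ) + α₂) (fun w ⟨i, r₁, r₂⟩ => Eb22_apply w i r₁ r₂) hW22 hw₁ hw₁0
  obtain ⟨⟨i₀, σ₁, σ₂⟩, hp₀⟩ := Finsupp.support_nonempty_iff.2 hw₂0
  let N := w₂.support.sup fun p => p.1.natAbs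
  refine ⟨w₂, hw₂, hw₂0, σ₁, σ₂, -N, N, fun i r₁ r₂ hi => ?_⟩
  have hp := Finsupp.mem_support_iff.2 hi
  have e₁ := h₁ _ (hsub hp) _ (hsub hp₀)
  have e₂ := h₂ _ hp _ hp₀
  have hN : i.natAbs ≤ N := Finset.le_sup (f := fun p => p.1.natAbs) hp
  simp only [add_left_inj, Int.cast_inj] at e₁ e₂
  exact ⟨e₁, e₂, by omega, by omega⟩

section Trim

variable (α₁ α₂ lam b c)

/- On `vᵢ(σ₁, σ₂)`, `trimBottom` is a combination of `vᵢ` and `vᵢ₊₁` of weight `(σ₁, σ₂ - 1)`, and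
`trimTop` one of `vᵢ₋₁` and `vᵢ` of weight `(σ₁ - 1, σ₂)`. The scalars make the `vᵢ` coefficient
vanish at `i = m` (resp. `i = M`) and the other one at `i = M` (resp. `i = m`), so both shorten a
segment `[m, M]` carrying `w` by one. -/
noncomputable def trimBottom (σ₁ σ₂ m M : ℤ) (w : F3) : F3 :=
  ((σ₂ : ℂ) + α₂ - b + lam + M) • E₁₂ (E₃₁ w) + E₁₃ (E₃₁ (E₃₂ w))
    + (((σ₁ : ℂ) + α₁ - b - lam - m) * (α₁ + 2 * b + σ₁ + m - M - 2)) • E₃₂ w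

noncomputable def trimTop (σ₁ σ₂ m M : ℤ) (w : F3) : F3 :=
  ((σ₁ : ℂ) + α₁ - b - lam - m) • E₂₁ (E₃₂ w) + E₂₃ (E₃₂ (E₃₁ w))
    + (((σ₂ : ℂ) + α₂ - b + lam + M) * (α₂ + 2 * b + σ₂ + m - M - 2)) • E₃₁ w

variable {α₁ α₂ lam b c}

variable {σ₁ σ₂ m M : ℤ} {w : F3}

theorem trimBottom_apply (j s₁ s₂ : ℤ) :
    trimBottom α₁ α₂ lam b c σ₁ σ₂ m M w (j, s₁, s₂) =
      (s₂ + 1 + α₂ - b + lam + j)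
          * ((s₁ + α₁ - b - lam - j) * (σ₂ - s₁ - s₂ + 1 + M - j - α₁ - 2 * b)
            + (σ₁ + α₁ - b - lam - m) * (α₁ + 2 * b + σ₁ + m - M - 2)) * w (j, s₁, s₂ + 1)
        + (c + lam + j - 1) * (s₁ + α₁ - b - lam - j + 1) * (σ₂ - s₂ + M - j)
          * w (j - 1, s₁, s₂ + 1) := by
  simp only [trimBottom, Finsupp.add_apply, Finsupp.smul_apply, smul_eq_mul, Eb12_apply,
    Eb13_apply, Eb31_apply, Eb32_apply, sub_add_cancel]
  push_cast
  ring

theorem trimTop_apply (j s₁ s₂ : ℤ) :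
    trimTop α₁ α₂ lam b c σ₁ σ₂ m M w (j, s₁, s₂) =
      (c - lam - j - 1) * (s₂ + α₂ - b + lam + j + 1) * (σ₁ - s₁ + j - m)
          * w (j + 1, s₁ + 1, s₂)
        + (s₁ + 1 + α₁ - b - lam - j)
          * ((s₂ + α₂ - b + lam + j) * (σ₁ - s₁ - s₂ + 1 - m + j - α₂ - 2 * b)
            + (σ₂ + α₂ - b + lam + M) * (α₂ + 2 * b + σ₂ + m - M - 2)) * w (j, s₁ + 1, s₂) := by
  simp only [trimTop, Finsupp.add_apply, Finsupp.smul_apply, smul_eq_mul, Eb21_apply,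
    Eb23_apply, Eb31_apply, Eb32_apply, sub_add_cancel]
  push_cast
  ring

variable {W : Submodule ℂ F3}

theorem trimBottom_mem (hW12 : ∀ x ∈ W, E₁₂ x ∈ W) (hW13 : ∀ x ∈ W, E₁₃ x ∈ W)
    (hW31 : ∀ x ∈ W, E₃₁ x ∈ W) (hW32 : ∀ x ∈ W, E₃₂ x ∈ W) (hw : w ∈ W) :
    trimBottom α₁ α₂ lam b c σ₁ σ₂ m M w ∈ W :=
  W.add_mem (W.add_mem (W.smul_mem _ (hW12 _ (hW31 w hw))) (hW13 _ (hW31 _ (hW32 w hw))))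
    (W.smul_mem _ (hW32 w hw))

theorem trimTop_mem (hW21 : ∀ x ∈ W, E₂₁ x ∈ W) (hW23 : ∀ x ∈ W, E₂₃ x ∈ W)
    (hW31 : ∀ x ∈ W, E₃₁ x ∈ W) (hW32 : ∀ x ∈ W, E₃₂ x ∈ W) (hw : w ∈ W) :
    trimTop α₁ α₂ lam b c σ₁ σ₂ m M w ∈ W :=
  W.add_mem (W.add_mem (W.smul_mem _ (hW21 _ (hW32 w hw))) (hW23 _ (hW32 _ (hW31 w hw))))
    (W.smul_mem _ (hW31 w hw))

theorem SupportedIn.trimBottom (hw : SupportedIn w σ₁ σ₂ m M) :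
    SupportedIn (trimBottom α₁ α₂ lam b c σ₁ σ₂ m M w) σ₁ (σ₂ - 1) (m + 1) M := by
  simpa using hw.of_apply_eq (k := 0) (d₁ := 0) (d₂ := 1) _ _
    (fun j s₁ s₂ => by rw [trimBottom_apply, add_zero, add_zero]) (by push_cast; ring)
    (by push_cast; ring)

theorem SupportedIn.trimTop (hw : SupportedIn w σ₁ σ₂ m M) :
    SupportedIn (trimTop α₁ α₂ lam b c σ₁ σ₂ m M w) (σ₁ - 1) σ₂ m (M - 1) := by
  simpa using hw.of_apply_eq (k := 1) (d₁ := 1) (d₂ := 0) _ _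
    (fun j s₁ s₂ => by rw [trimTop_apply, add_zero, add_sub_cancel_right]) (by push_cast; ring)
    (by push_cast; ring)

theorem trimBottom_ne_zero_or_trimTop_ne_zero (h3 : ∀ m : ℤ, α₁ - b - lam ≠ m)
    (h9 : ∀ m : ℤ, c + 3 * b ≠ m) (h10 : ∀ m : ℤ, c - 3 * b ≠ m) (hm : m < M)
    (hwm : w (m, σ₁, σ₂) ≠ 0) :
    trimBottom α₁ α₂ lam b c σ₁ σ₂ m M w ≠ 0 ∨ trimTop α₁ α₂ lam b c σ₁ σ₂ m M w ≠ 0 := by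
  by_contra! h
  have e₁ := DFunLike.congr_fun h.1 (m + 1, σ₁, σ₂ - 1)
  have e₂ := DFunLike.congr_fun h.2 (m, σ₁ - 1, σ₂)
  rw [trimBottom_apply, Finsupp.coe_zero, Pi.zero_apply, sub_add_cancel, add_sub_cancel_right] at e₁
  rw [trimTop_apply, Finsupp.coe_zero, Pi.zero_apply, sub_add_cancel] at e₂
  push_cast at e₁ e₂
  have hD : ((M - m : ℤ) : ℂ) ≠ 0 := Int.cast_ne_zero.2 (by omega)
  -- eliminate `w (m + 1, σ₁, σ₂)` between the two coefficients
  have key : w (m, σ₁, σ₂) * (σ₁ + α₁ - b - lam - m) * ((M - m : ℤ) : ℂ)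
      * ((c - 3 * b + M - m + 1) * (c + 3 * b - M + m - 2)) = 0 := by
    push_cast
    linear_combination (c - lam - m - 1) * e₁ - (3 * b + lam + m - 1 - (M - m)) * e₂
  exact mul_ne_zero (mul_ne_zero (mul_ne_zero hwm
    (ne_zero_of_eq_add_intCast h3 (σ₁ - m) (by push_cast; ring))) hD)
    (mul_ne_zero (ne_zero_of_eq_add_intCast h10 (M - m + 1) (by push_cast; ring))
      (ne_zero_of_eq_add_intCast h9 (m - M - 2) (by push_cast; ring))) key

theorem exists_vb_mem_of_supportedIn (h3 : ∀ m : ℤ, α₁ - b - lam ≠ m)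
    (h9 : ∀ m : ℤ, c + 3 * b ≠ m) (h10 : ∀ m : ℤ, c - 3 * b ≠ m)
    (hW12 : ∀ x ∈ W, E₁₂ x ∈ W) (hW21 : ∀ x ∈ W, E₂₁ x ∈ W) (hW13 : ∀ x ∈ W, E₁₃ x ∈ W)
    (hW31 : ∀ x ∈ W, E₃₁ x ∈ W) (hW23 : ∀ x ∈ W, E₂₃ x ∈ W) (hW32 : ∀ x ∈ W, E₃₂ x ∈ W)
    (hw : w ∈ W) (hw0 : w ≠ 0) (hsupp : SupportedIn w σ₁ σ₂ m M) :
    ∃ i r₁ r₂, vb i r₁ r₂ ∈ W := by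
  induction h : (M - m).toNat using Nat.strong_induction_on generalizing w σ₁ σ₂ m M with
  | _ n ih =>
  by_cases hM : M ≤ m
  · rw [hsupp.eq_smul_vb hM] at hw hw0
    exact ⟨m, σ₁, σ₂, (W.smul_mem_iff (left_ne_zero_of_smul hw0)).1 hw⟩
  by_cases hwm : w (m, σ₁, σ₂) = 0
  · exact ih _ (by omega) hw hw0 (hsupp.succ_left hwm) rfl
  rcases trimBottom_ne_zero_or_trimTop_ne_zero h3 h9 h10 (not_le.1 hM) hwm with hz | hz
  · exact ih _ (by omega) (trimBottom_mem hW12 hW13 hW31 hW32 hw) hz hsupp.trimBottom rfl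
  · exact ih _ (by omega) (trimTop_mem hW21 hW23 hW31 hW32 hw) hz hsupp.trimTop rfl

end Trim

section Spread

variable {W : Submodule ℂ F3} {i r₁ r₂ : ℤ}

theorem vb_succ_mem (h1 : ∀ m : ℤ, c + lam ≠ m) (h3 : ∀ m : ℤ, α₁ - b - lam ≠ m)
    (hW13 : ∀ x ∈ W, E₁₃ x ∈ W) (hW31 : ∀ x ∈ W, E₃₁ x ∈ W) (h : vb i r₁ r₂ ∈ W) :
    vb (i + 1) r₁ r₂ ∈ W := by
  have hE := hW13 _ (hW31 _ h)
  rwa [Eb31_vb, map_smul, Eb13_vb, sub_add_cancel,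
    W.smul_mem_iff (ne_zero_of_eq_add_intCast h3 (r₁ - i) (by push_cast; ring)),
    W.sub_mem_iff_right (W.smul_mem _ h),
    W.smul_mem_iff (ne_zero_of_eq_add_intCast h1 i rfl)] at hE

theorem vb_pred_mem (h2 : ∀ m : ℤ, c - lam ≠ m) (h4 : ∀ m : ℤ, α₂ - b + lam ≠ m)
    (hW23 : ∀ x ∈ W, E₂₃ x ∈ W) (hW32 : ∀ x ∈ W, E₃₂ x ∈ W) (h : vb i r₁ r₂ ∈ W) :
    vb (i - 1) r₁ r₂ ∈ W := by
  have hE := hW23 _ (hW32 _ h)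
  rwa [Eb32_vb, map_smul, Eb23_vb, sub_add_cancel,
    W.smul_mem_iff (ne_zero_of_eq_add_intCast h4 (r₂ + i) (by push_cast; ring)),
    W.sub_mem_iff_left (W.smul_mem _ h),
    W.smul_mem_iff
      (neg_ne_zero.2 (ne_zero_of_eq_add_intCast h2 (-i) (by push_cast; ring)))] at hE

theorem vb_mem_of_vb_mem (h1 : ∀ m : ℤ, c + lam ≠ m) (h2 : ∀ m : ℤ, c - lam ≠ m)
    (h3 : ∀ m : ℤ, α₁ - b - lam ≠ m) (h4 : ∀ m : ℤ, α₂ - b + lam ≠ m)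
    (hW13 : ∀ x ∈ W, E₁₃ x ∈ W) (hW31 : ∀ x ∈ W, E₃₁ x ∈ W)
    (hW23 : ∀ x ∈ W, E₂₃ x ∈ W) (hW32 : ∀ x ∈ W, E₃₂ x ∈ W) (h : vb i r₁ r₂ ∈ W) (j : ℤ) :
    vb j r₁ r₂ ∈ W :=
  Int.inductionOn' j i h (fun _ _ => vb_succ_mem h1 h3 hW13 hW31)
    (fun _ _ => vb_pred_mem h2 h4 hW23 hW32)

theorem vb_fst_pred_mem (h3 : ∀ m : ℤ, α₁ - b - lam ≠ m) (hW31 : ∀ x ∈ W, E₃₁ x ∈ W)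
    (h : vb i r₁ r₂ ∈ W) : vb i (r₁ - 1) r₂ ∈ W := by
  have hE := hW31 _ h
  rwa [Eb31_vb, W.smul_mem_iff (ne_zero_of_eq_add_intCast h3 (r₁ - i) (by push_cast; ring))] at hE

theorem vb_snd_pred_mem (h4 : ∀ m : ℤ, α₂ - b + lam ≠ m) (hW32 : ∀ x ∈ W, E₃₂ x ∈ W)
    (h : vb i r₁ r₂ ∈ W) : vb i r₁ (r₂ - 1) ∈ W := by
  have hE := hW32 _ h
  rwa [Eb32_vb, W.smul_mem_iff (ne_zero_of_eq_add_intCast h4 (r₂ + i) (by push_cast; ring))] at hE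

theorem vb_fst_succ_snd_pred_mem (h4 : ∀ m : ℤ, α₂ - b + lam ≠ m)
    (h5 : ∀ m : ℤ, α₁ + 2 * b ≠ m) (hW12 : ∀ x ∈ W, E₁₂ x ∈ W) (hW13 : ∀ x ∈ W, E₁₃ x ∈ W)
    (hW32 : ∀ x ∈ W, E₃₂ x ∈ W) (h : vb i r₁ r₂ ∈ W) : vb i (r₁ + 1) (r₂ - 1) ∈ W := by
  have hE := W.add_mem (hW12 _ h) (hW13 _ (vb_snd_pred_mem h4 hW32 h))
  rw [Eb12_vb, Eb13_vb] at hE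
  have hE' : (-(α₁ + 2 * b + r₁ - 1)) • vb i (r₁ + 1) (r₂ - 1) ∈ W := by
    convert hE using 1
    push_cast
    module
  exact (W.smul_mem_iff (neg_ne_zero.2
    (ne_zero_of_eq_add_intCast h5 (r₁ - 1) (by push_cast; ring)))).1 hE'

theorem vb_fst_pred_snd_succ_mem (h3 : ∀ m : ℤ, α₁ - b - lam ≠ m)
    (h6 : ∀ m : ℤ, α₂ + 2 * b ≠ m) (hW21 : ∀ x ∈ W, E₂₁ x ∈ W) (hW23 : ∀ x ∈ W, E₂₃ x ∈ W)
    (hW31 : ∀ x ∈ W, E₃₁ x ∈ W) (h : vb i r₁ r₂ ∈ W) : vb i (r₁ - 1) (r₂ + 1) ∈ W := by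
  have hE := W.add_mem (hW21 _ h) (hW23 _ (vb_fst_pred_mem h3 hW31 h))
  rw [Eb21_vb, Eb23_vb] at hE
  have hE' : (-(α₂ + 2 * b + r₂ - 1)) • vb i (r₁ - 1) (r₂ + 1) ∈ W := by
    convert hE using 1
    push_cast
    module
  exact (W.smul_mem_iff (neg_ne_zero.2
    (ne_zero_of_eq_add_intCast h6 (r₂ - 1) (by push_cast; ring)))).1 hE'

theorem vb_fst_succ_mem (h4 : ∀ m : ℤ, α₂ - b + lam ≠ m) (h5 : ∀ m : ℤ, α₁ + 2 * b ≠ m)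
    (h7 : ∀ m : ℤ, α₁ + α₂ + b + c ≠ m) (h8 : ∀ m : ℤ, α₁ + α₂ + b - c ≠ m)
    (hW12 : ∀ x ∈ W, E₁₂ x ∈ W) (hW13 : ∀ x ∈ W, E₁₃ x ∈ W) (hW23 : ∀ x ∈ W, E₂₃ x ∈ W)
    (hW32 : ∀ x ∈ W, E₃₂ x ∈ W) (h : ∀ j, vb j r₁ r₂ ∈ W) : vb i (r₁ + 1) r₂ ∈ W := by
  have hE₁ := hW13 _ (h i)
  have hE₂ := hW23 _ (vb_fst_succ_snd_pred_mem h4 h5 hW12 hW13 hW32 (h (i + 1)))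
  rw [Eb13_vb, sub_eq_add_neg, ← neg_smul] at hE₁
  rw [Eb23_vb, sub_eq_add_neg, ← neg_smul, add_sub_cancel_right, sub_add_cancel] at hE₂
  refine W.mem_of_smul_add_smul_mem_of_det_ne_zero ?_ hE₁ hE₂
  convert mul_ne_zero (ne_zero_of_eq_add_intCast h8 (r₁ + r₂) rfl)
    (ne_zero_of_eq_add_intCast h7 (r₁ + r₂ - 1) rfl) using 1
  push_cast
  ring

theorem vb_snd_succ_mem (h3 : ∀ m : ℤ, α₁ - b - lam ≠ m) (h6 : ∀ m : ℤ, α₂ + 2 * b ≠ m)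
    (h7 : ∀ m : ℤ, α₁ + α₂ + b + c ≠ m) (h8 : ∀ m : ℤ, α₁ + α₂ + b - c ≠ m)
    (hW21 : ∀ x ∈ W, E₂₁ x ∈ W) (hW13 : ∀ x ∈ W, E₁₃ x ∈ W) (hW23 : ∀ x ∈ W, E₂₃ x ∈ W)
    (hW31 : ∀ x ∈ W, E₃₁ x ∈ W) (h : ∀ j, vb j r₁ r₂ ∈ W) : vb i r₁ (r₂ + 1) ∈ W := by
  have hE₁ := hW23 _ (h (i + 1))
  have hE₂ := hW13 _ (vb_fst_pred_snd_succ_mem h3 h6 hW21 hW23 hW31 (h i))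
  rw [Eb23_vb, sub_eq_add_neg, ← neg_smul, add_sub_cancel_right] at hE₁
  rw [Eb13_vb, sub_eq_add_neg, ← neg_smul, sub_add_cancel] at hE₂
  refine W.mem_of_smul_add_smul_mem_of_det_ne_zero ?_ hE₁ hE₂
  convert neg_ne_zero.2 (mul_ne_zero (ne_zero_of_eq_add_intCast h8 (r₁ + r₂) rfl)
    (ne_zero_of_eq_add_intCast h7 (r₁ + r₂ - 1) rfl)) using 1
  push_cast
  ring

theorem forall_vb_mem (h1 : ∀ m : ℤ, c + lam ≠ m) (h2 : ∀ m : ℤ, c - lam ≠ m)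
    (h3 : ∀ m : ℤ, α₁ - b - lam ≠ m) (h4 : ∀ m : ℤ, α₂ - b + lam ≠ m)
    (h5 : ∀ m : ℤ, α₁ + 2 * b ≠ m) (h6 : ∀ m : ℤ, α₂ + 2 * b ≠ m)
    (h7 : ∀ m : ℤ, α₁ + α₂ + b + c ≠ m) (h8 : ∀ m : ℤ, α₁ + α₂ + b - c ≠ m)
    (hW12 : ∀ x ∈ W, E₁₂ x ∈ W) (hW21 : ∀ x ∈ W, E₂₁ x ∈ W) (hW13 : ∀ x ∈ W, E₁₃ x ∈ W)
    (hW31 : ∀ x ∈ W, E₃₁ x ∈ W) (hW23 : ∀ x ∈ W, E₂₃ x ∈ W) (hW32 : ∀ x ∈ W, E₃₂ x ∈ W)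
    (h : vb i r₁ r₂ ∈ W) (j s₁ s₂ : ℤ) : vb j s₁ s₂ ∈ W := by
  have hline : ∀ t, vb t r₁ r₂ ∈ W := vb_mem_of_vb_mem h1 h2 h3 h4 hW13 hW31 hW23 hW32 h
  have hplane : ∀ t₁ t, vb t t₁ r₂ ∈ W := fun t₁ =>
    Int.inductionOn' t₁ r₁ hline
      (fun _ _ hk _ => vb_fst_succ_mem h4 h5 h7 h8 hW12 hW13 hW23 hW32 hk)
      (fun _ _ hk t => vb_fst_pred_mem h3 hW31 (hk t))
  exact Int.inductionOn' s₂ r₂ (hplane s₁)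
    (fun _ _ hk _ => vb_snd_succ_mem h3 h6 h7 h8 hW21 hW13 hW23 hW31 hk)
    (fun _ _ hk t => vb_snd_pred_mem h4 hW32 (hk t)) j

end Spread

end Module

theorem F3_irreducible_general (α₁ α₂ lam b c : ℂ)
    (h1 : ∀ m : ℤ, c + lam ≠ (m : ℂ)) (h2 : ∀ m : ℤ, c - lam ≠ (m : ℂ))
    (h3 : ∀ m : ℤ, α₁ - b - lam ≠ (m : ℂ)) (h4 : ∀ m : ℤ, α₂ - b + lam ≠ (m : ℂ))
    (h5 : ∀ m : ℤ, α₁ + 2 * b ≠ (m : ℂ)) (h6 : ∀ m : ℤ, α₂ + 2 * b ≠ (m : ℂ))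
    (h7 : ∀ m : ℤ, α₁ + α₂ + b + c ≠ (m : ℂ)) (h8 : ∀ m : ℤ, α₁ + α₂ + b - c ≠ (m : ℂ))
    (h9 : ∀ m : ℤ, c + 3 * b ≠ (m : ℂ)) (h10 : ∀ m : ℤ, c - 3 * b ≠ (m : ℂ))
    (W : Submodule ℂ F3)
    (hW11 : ∀ x ∈ W, Eb11 α₁ α₂ lam b c x ∈ W) (hW22 : ∀ x ∈ W, Eb22 α₁ α₂ lam b c x ∈ W)
    (hW12 : ∀ x ∈ W, Eb12 α₁ α₂ lam b c x ∈ W)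
    (hW21 : ∀ x ∈ W, Eb21 α₁ α₂ lam b c x ∈ W) (hW13 : ∀ x ∈ W, Eb13 α₁ α₂ lam b c x ∈ W)
    (hW31 : ∀ x ∈ W, Eb31 α₁ α₂ lam b c x ∈ W) (hW23 : ∀ x ∈ W, Eb23 α₁ α₂ lam b c x ∈ W)
    (hW32 : ∀ x ∈ W, Eb32 α₁ α₂ lam b c x ∈ W) :
    W = ⊥ ∨ W = ⊤ := by
  refine or_iff_not_imp_left.2 fun hW => ?_
  obtain ⟨w, hw, hw0, σ₁, σ₂, m, M, hsupp⟩ := exists_supportedIn_mem hW11 hW22 hW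
  obtain ⟨i, r₁, r₂, hv⟩ :=
    exists_vb_mem_of_supportedIn h3 h9 h10 hW12 hW21 hW13 hW31 hW23 hW32 hw hw0 hsupp
  rw [eq_top_iff, ← Finsupp.basisSingleOne.span_eq, Submodule.span_le]
  rintro _ ⟨⟨j, s₁, s₂⟩, rfl⟩
  exact forall_vb_mem h1 h2 h3 h4 h5 h6 h7 h8 hW12 hW21 hW13 hW31 hW23 hW32 hv j s₁ s₂

/-- Theorem 2.3: under the genericity conditions the sl₃-module F^α_{2b}(V) is irreducible:
    every sl₃-invariant subspace is 0 or everything. -/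
theorem F3_irreducible (α₁ α₂ lam b c : ℂ)
    (h1 : ∀ m : ℤ, c + lam ≠ (m : ℂ)) (h2 : ∀ m : ℤ, c - lam ≠ (m : ℂ))
    (h3 : ∀ m : ℤ, α₁ - b - lam ≠ (m : ℂ)) (h4 : ∀ m : ℤ, α₂ - b + lam ≠ (m : ℂ))
    (h5 : ∀ m : ℤ, α₁ + 2 * b ≠ (m : ℂ)) (h6 : ∀ m : ℤ, α₂ + 2 * b ≠ (m : ℂ))
    (h7 : ∀ m : ℤ, α₁ + α₂ + b + c ≠ (m : ℂ)) (h8 : ∀ m : ℤ, α₁ + α₂ + b - c ≠ (m : ℂ))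
    (h9 : ∀ m : ℤ, c + 3 * b ≠ (m : ℂ)) (h10 : ∀ m : ℤ, c - 3 * b ≠ (m : ℂ))
    (W : Submodule ℂ F3)
    (hW11 : ∀ x ∈ W, Eb11 α₁ α₂ lam b c x ∈ W) (hW22 : ∀ x ∈ W, Eb22 α₁ α₂ lam b c x ∈ W)
    (hW33 : ∀ x ∈ W, Eb33 α₁ α₂ lam b c x ∈ W) (hW12 : ∀ x ∈ W, Eb12 α₁ α₂ lam b c x ∈ W)
    (hW21 : ∀ x ∈ W, Eb21 α₁ α₂ lam b c x ∈ W) (hW13 : ∀ x ∈ W, Eb13 α₁ α₂ lam b c x ∈ W)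
    (hW31 : ∀ x ∈ W, Eb31 α₁ α₂ lam b c x ∈ W) (hW23 : ∀ x ∈ W, Eb23 α₁ α₂ lam b c x ∈ W)
    (hW32 : ∀ x ∈ W, Eb32 α₁ α₂ lam b c x ∈ W) :
    W = ⊥ ∨ W = ⊤ :=
  F3_irreducible_general α₁ α₂ lam b c h1 h2 h3 h4 h5 h6 h7 h8 h9 h10 W hW11 hW22 hW12 hW21 hW13
    hW31 hW23 hW32
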